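/- arXiv:math/0112279 — 4 statements merged into one kernel-verified Lean document; each statement's English description precedes it below -/
import Mathlib

section
/- Let A₀ and V be n×n Hermitian complex matrices and let F : ℝ → ℝ be continuously differentiable. Then tr(F(A₀+V)) − tr(F(A₀)) = ∫_ℝ F'(λ) · ξ(λ; A₀+V, A₀) dλ, where F(A) denotes the Hermitian matrix obtained by applying F to A through the functional calculus (i.e., F applied to each eigenvalue in a spectral decomposition of A), and the integrand F'·ξ is Lebesgue integrable on ℝ (ξ being bounded with compact support). -/
open Finset MeasureTheory

/-- The eigenvalue counting function `N(λ; A) = #{j : λ_j(A) ≤ λ}` of a Hermitian matrix. -/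
noncomputable def countLE {n : ℕ} {A : Matrix (Fin n) (Fin n) ℂ} (hA : A.IsHermitian)
    (lam : ℝ) : ℕ :=
  (Finset.univ.filter (fun j => hA.eigenvalues j ≤ lam)).card

/-- The finite-dimensional spectral shift function of a pair of Hermitian matrices:
`ξ(λ; A, A₀) = N(λ; A₀) - N(λ; A)`. -/
noncomputable def ssf {n : ℕ} {A A₀ : Matrix (Fin n) (Fin n) ℂ}
    (hA : A.IsHermitian) (hA₀ : A₀.IsHermitian) (lam : ℝ) : ℝ :=
  (countLE hA₀ lam : ℝ) - (countLE hA lam : ℝ)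

lemma trace_cfc_eq_sum {n : ℕ} {A : Matrix (Fin n) (Fin n) ℂ} (hA : A.IsHermitian) (f : ℝ → ℝ) :
    (hA.cfc f).trace = ∑ j, (f (hA.eigenvalues j) : ℂ) := by
  rw [Matrix.IsHermitian.cfc, Unitary.conjStarAlgAut_apply, Matrix.trace_mul_cycle]
  simp [← Matrix.mul_assoc, Matrix.trace_diagonal]

lemma integral_indicator_Ico_deriv {F : ℝ → ℝ} (hF : ContDiff ℝ 1 F) {a b : ℝ} (hab : a ≤ b) :
    ∫ x, (Set.Ico a b).indicator (deriv F) x = F b - F a := by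
  rw [integral_indicator measurableSet_Ico, integral_Ico_eq_integral_Ioo,
    ← integral_Ioc_eq_integral_Ioo, ← intervalIntegral.integral_of_le hab]
  exact intervalIntegral.integral_deriv_eq_sub
    (fun x _ => (hF.differentiable one_ne_zero).differentiableAt)
    ((hF.continuous_deriv le_rfl).intervalIntegrable a b)

lemma key_lemma {F : ℝ → ℝ} (hF : ContDiff ℝ 1 F) (a b : ℝ) :
    Integrable (fun lam => deriv F lam *
        ((if a ≤ lam then (1:ℝ) else 0) - (if b ≤ lam then (1:ℝ) else 0))) ∧
      (∫ lam, deriv F lam *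
        ((if a ≤ lam then (1:ℝ) else 0) - (if b ≤ lam then (1:ℝ) else 0))) = F b - F a := by
  have hptwise : (fun lam => deriv F lam *
      ((if a ≤ lam then (1:ℝ) else 0) - (if b ≤ lam then (1:ℝ) else 0)))
      = fun x => (Set.Ico a b).indicator (deriv F) x - (Set.Ico b a).indicator (deriv F) x := by
    funext x
    simp only [Set.indicator_apply, Set.mem_Ico]
    rcases le_or_gt a x with h1 | h1 <;> rcases le_or_gt b x with h2 | h2
    · simp [h1, h2, not_lt.2 h1, not_lt.2 h2]
    · simp [h1, h2, not_lt.2 h1, not_le.2 h2]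
    · simp [h1, h2, not_le.2 h1, not_lt.2 h2]
    · simp [h1, h2, not_le.2 h1, not_le.2 h2]
  have hint : ∀ c d : ℝ, Integrable (fun x => (Set.Ico c d).indicator (deriv F) x) := by
    intro c d
    exact (((hF.continuous_deriv le_rfl).integrableOn_Icc).mono_set
      Set.Ico_subset_Icc_self).integrable_indicator measurableSet_Ico
  rw [hptwise]
  refine ⟨(hint a b).sub (hint b a), ?_⟩
  rw [integral_sub (hint a b) (hint b a)]
  rcases le_total a b with h | h
  · rw [integral_indicator_Ico_deriv hF h, Set.Ico_eq_empty (not_lt.2 h)]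
    simp
  · rw [integral_indicator_Ico_deriv hF h, Set.Ico_eq_empty (not_lt.2 h)]
    simp

/-- **Krein's trace formula**, finite-dimensional case: for Hermitian matrices `A₀`, `V` and a
continuously differentiable `F : ℝ → ℝ`,
`tr (F(A₀+V)) - tr (F(A₀)) = ∫ F'(λ) ξ(λ; A₀+V, A₀) dλ`, where `F` is applied to a Hermitian
matrix via the functional calculus.  The integrand is Lebesgue integrable on `ℝ`. -/
theorem trace_formula {n : ℕ} (A₀ V : Matrix (Fin n) (Fin n) ℂ)
    (hA₀ : A₀.IsHermitian) (hV : V.IsHermitian) (F : ℝ → ℝ) (hF : ContDiff ℝ 1 F) :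
    Integrable (fun lam => deriv F lam * ssf (hA₀.add hV) hA₀ lam) ∧
      ((hA₀.add hV).cfc F).trace - (hA₀.cfc F).trace
        = ((∫ lam, deriv F lam * ssf (hA₀.add hV) hA₀ lam) : ℝ) := by
  set μ := (hA₀.add hV).eigenvalues with hμ
  set ν := hA₀.eigenvalues with hν
  have hfun : (fun lam => deriv F lam * ssf (hA₀.add hV) hA₀ lam)
      = fun lam => ∑ j, deriv F lam *
        ((if ν j ≤ lam then (1:ℝ) else 0) - (if μ j ≤ lam then (1:ℝ) else 0)) := by
    funext lam
    rw [← Finset.mul_sum]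
    congr 1
    rw [ssf, countLE, countLE, Finset.card_filter, Finset.card_filter]
    push_cast
    rw [Finset.sum_sub_distrib]
  have hInt : ∀ j : Fin n, Integrable (fun lam => deriv F lam *
      ((if ν j ≤ lam then (1:ℝ) else 0) - (if μ j ≤ lam then (1:ℝ) else 0))) :=
    fun j => (key_lemma hF (ν j) (μ j)).1
  have hIntegrable : Integrable (fun lam => deriv F lam * ssf (hA₀.add hV) hA₀ lam) := by
    rw [hfun]; exact integrable_finset_sum _ (fun j _ => hInt j)
  refine ⟨hIntegrable, ?_⟩
  have hval : (∫ lam, deriv F lam * ssf (hA₀.add hV) hA₀ lam)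
      = (∑ j, F (μ j)) - ∑ j, F (ν j) := by
    rw [hfun, integral_finset_sum _ (fun j _ => hInt j)]
    rw [← Finset.sum_sub_distrib]
    exact Finset.sum_congr rfl fun j _ => (key_lemma hF (ν j) (μ j)).2
  rw [trace_cfc_eq_sum, trace_cfc_eq_sum, hval]
  push_cast
  ring
end

section
/- Let A₀ and V be n×n Hermitian complex matrices and let f : ℝ → ℝ be continuous, nonnegative, and nonincreasing. Then the function α ↦ tr(f(A₀ + αV)·V) is a nonincreasing real-valued function of α ∈ ℝ: for α₁ ≤ α₂ one has tr(f(A₀+α₁V)·V) ≥ tr(f(A₀+α₂V)·V). Here f(A) denotes the Hermitian matrix obtained by applying f to A through the functional calculus, and the trace of the product f(A₀+αV)·V is a real number since both factors are Hermitian. -/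
open Finset Matrix

lemma diag_trace {n : ℕ} (M : Matrix (Fin n) (Fin n) ℂ) (d e : Fin n → ℂ) :
    (Matrix.diagonal d * M * Matrix.diagonal e * Mᴴ).trace
      = ∑ i, ∑ j, d i * e j * (M i j * star (M i j)) := by
  simp [Matrix.trace, Matrix.diag, Matrix.mul_apply, Matrix.diagonal_apply, Finset.mul_sum,
    Matrix.conjTranspose_apply]
  congr 1; ext i; congr 1; ext j; ring

lemma trace_rearrange {n : ℕ} (U D W E : Matrix (Fin n) (Fin n) ℂ) :
    (U * D * star U * (W * E * star W)).trace
      = (D * (star U * W) * E * star (star U * W)).trace := by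
  have h : star (star U * W) = star W * U := by
    rw [Matrix.star_mul, star_star]
  rw [h]
  have h2 : U * D * star U * (W * E * star W) = U * (D * (star U * W) * E * star W) := by
    simp only [mul_assoc]
  rw [h2, Matrix.trace_mul_comm]
  simp only [mul_assoc]

lemma conj_trace {n : ℕ} (U W : Matrix (Fin n) (Fin n) ℂ) (d e : Fin n → ℝ) :
    ((U * Matrix.diagonal ((RCLike.ofReal : ℝ → ℂ) ∘ d) * star U
        * (W * Matrix.diagonal ((RCLike.ofReal : ℝ → ℂ) ∘ e) * star W)).trace).re
      = ∑ i, ∑ j, d i * e j * Complex.normSq ((star U * W) i j) := by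
  rw [trace_rearrange, Matrix.star_eq_conjTranspose (star U * W), diag_trace]
  simp [Complex.mul_conj, ← Complex.ofReal_mul, mul_assoc]

lemma row_sum_normSq {n : ℕ} {M : Matrix (Fin n) (Fin n) ℂ} (hM : M * star M = 1) (i : Fin n) :
    ∑ j, Complex.normSq (M i j) = 1 := by
  have h := congrFun (congrFun hM i) i
  simp only [Matrix.mul_apply, Matrix.one_apply_eq] at h
  have := congrArg Complex.re h
  simpa [Matrix.star_apply, Complex.mul_conj] using this

lemma col_sum_normSq {n : ℕ} {M : Matrix (Fin n) (Fin n) ℂ} (hM : star M * M = 1) (j : Fin n) :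
    ∑ i, Complex.normSq (M i j) = 1 := by
  have h := congrFun (congrFun hM j) j
  simp only [Matrix.mul_apply, Matrix.one_apply_eq] at h
  have := congrArg Complex.re h
  simpa [Matrix.star_apply, Complex.mul_conj, Complex.normSq_conj, mul_comm] using this

lemma key_ineq {n : ℕ} {A B : Matrix (Fin n) (Fin n) ℂ} (hA : A.IsHermitian)
    (hB : B.IsHermitian) {f : ℝ → ℝ} (hf : Antitone f) :
    (((hA.cfc f - hB.cfc f) * (A - B)).trace).re ≤ 0 := by
  set U : Matrix (Fin n) (Fin n) ℂ := ↑(hA.eigenvectorUnitary) with hU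
  set W : Matrix (Fin n) (Fin n) ℂ := ↑(hB.eigenvectorUnitary) with hW
  set lam := hA.eigenvalues with hlam
  set mu := hB.eigenvalues with hmu
  set M := star U * W with hM
  set c : Fin n → Fin n → ℝ := fun i j => Complex.normSq (M i j) with hc
  have hUu : star U * U = 1 := Unitary.coe_star_mul_self hA.eigenvectorUnitary
  have hUu' : U * star U = 1 := Unitary.coe_mul_star_self hA.eigenvectorUnitary
  have hWu : star W * W = 1 := Unitary.coe_star_mul_self hB.eigenvectorUnitary
  have hWu' : W * star W = 1 := Unitary.coe_mul_star_self hB.eigenvectorUnitary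
  have hMl : star M * M = 1 := by
    rw [hM, Matrix.star_mul, star_star, mul_assoc, ← mul_assoc U, hUu', one_mul, hWu]
  have hMr : M * star M = 1 := by
    rw [hM, Matrix.star_mul, star_star, mul_assoc, ← mul_assoc W, hWu', one_mul, hUu]
  have hexp : (hA.cfc f - hB.cfc f) * (A - B)
      = hA.cfc f * A - hA.cfc f * B - hB.cfc f * A + hB.cfc f * B := by noncomm_ring
  rw [hexp]
  have hAspec := hA.spectral_theorem
  have hBspec := hB.spectral_theorem
  have hcfcA : hA.cfc f = U * Matrix.diagonal ((RCLike.ofReal : ℝ → ℂ) ∘ (f ∘ lam)) * star U := rfl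
  have hcfcB : hB.cfc f = W * Matrix.diagonal ((RCLike.ofReal : ℝ → ℂ) ∘ (f ∘ mu)) * star W := rfl
  have T2 : ((hA.cfc f * B).trace).re = ∑ i, ∑ j, f (lam i) * mu j * c i j := by
    rw [hcfcA]; conv_lhs => rw [hBspec]
    exact conj_trace U W (f ∘ lam) mu
  have T3 : ((hB.cfc f * A).trace).re = ∑ i, ∑ j, f (mu j) * lam i * c i j := by
    rw [hcfcB]; conv_lhs => rw [hAspec]
    refine (conj_trace W U (f ∘ mu) lam).trans ?_; rw [Finset.sum_comm]
    refine Finset.sum_congr rfl fun i _ => Finset.sum_congr rfl fun j _ => ?_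
    have h1 : (star W * U) j i = star (M i j) := by
      have : star W * U = star M := by rw [hM, Matrix.star_mul, star_star]
      rw [this, Matrix.star_apply]
    rw [h1, Complex.star_def, Complex.normSq_conj]; rfl
  have T1 : ((hA.cfc f * A).trace).re = ∑ i, f (lam i) * lam i := by
    rw [hcfcA]; conv_lhs => rw [hAspec]
    refine (conj_trace U U (f ∘ lam) lam).trans ?_
    simp [hUu, Matrix.one_apply, apply_ite Complex.normSq, mul_ite]
  have T4 : ((hB.cfc f * B).trace).re = ∑ j, f (mu j) * mu j := by
    rw [hcfcB]; conv_lhs => rw [hBspec]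
    refine (conj_trace W W (f ∘ mu) mu).trans ?_
    simp [hWu, Matrix.one_apply, apply_ite Complex.normSq, mul_ite]
  have e1 : ∑ i, f (lam i) * lam i = ∑ i, ∑ j, f (lam i) * lam i * c i j := by
    refine Finset.sum_congr rfl fun i _ => ?_
    rw [← Finset.mul_sum, row_sum_normSq hMr i, mul_one]
  have e4 : ∑ j, f (mu j) * mu j = ∑ i, ∑ j, f (mu j) * mu j * c i j := by
    rw [Finset.sum_comm]
    refine Finset.sum_congr rfl fun j _ => ?_
    rw [← Finset.mul_sum, col_sum_normSq hMl j, mul_one]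
  have hre : (((hA.cfc f * A - hA.cfc f * B - hB.cfc f * A + hB.cfc f * B)).trace).re
      = ((hA.cfc f * A).trace).re - ((hA.cfc f * B).trace).re - ((hB.cfc f * A).trace).re
        + ((hB.cfc f * B).trace).re := by
    simp [Matrix.trace_add, Matrix.trace_sub]
  rw [hre, T1, T2, T3, T4, e1, e4]
  have : ∑ i, ∑ j, f (lam i) * lam i * c i j - ∑ i, ∑ j, f (lam i) * mu j * c i j
      - ∑ i, ∑ j, f (mu j) * lam i * c i j + ∑ i, ∑ j, f (mu j) * mu j * c i j
      = ∑ i, ∑ j, ((f (lam i) - f (mu j)) * (lam i - mu j)) * c i j := by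
    rw [← Finset.sum_sub_distrib, ← Finset.sum_sub_distrib, ← Finset.sum_add_distrib]
    refine Finset.sum_congr rfl fun i _ => ?_
    rw [← Finset.sum_sub_distrib, ← Finset.sum_sub_distrib, ← Finset.sum_add_distrib]
    refine Finset.sum_congr rfl fun j _ => ?_
    ring
  rw [this]
  refine Finset.sum_nonpos fun i _ => Finset.sum_nonpos fun j _ => ?_
  have hcnn : 0 ≤ c i j := Complex.normSq_nonneg _
  rcases le_total (lam i) (mu j) with h | h
  · exact mul_nonpos_of_nonpos_of_nonneg
      (mul_nonpos_of_nonneg_of_nonpos (sub_nonneg.2 (hf h)) (sub_nonpos.2 h)) hcnn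
  · exact mul_nonpos_of_nonpos_of_nonneg
      (mul_nonpos_of_nonpos_of_nonneg (sub_nonpos.2 (hf h)) (sub_nonneg.2 h)) hcnn

/-- A real scalar multiple of a Hermitian matrix is Hermitian. -/
lemma Matrix.IsHermitian.smul_real {n : ℕ} {V : Matrix (Fin n) (Fin n) ℂ} (hV : V.IsHermitian)
    (r : ℝ) : (r • V).IsHermitian := by
  rw [Matrix.IsHermitian, Matrix.conjTranspose_smul, star_trivial, hV]

/-- **Birman–Solomyak monotonicity** (finite-dimensional case): for Hermitian matrices `A₀`, `V`
and a continuous nonnegative nonincreasing `f : ℝ → ℝ`, the real-valued function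
`α ↦ tr (f(A₀ + αV) V)` is nonincreasing, where `f` is applied to a Hermitian matrix via the
functional calculus. -/
theorem trace_cfc_mul_antitone {n : ℕ} (A₀ V : Matrix (Fin n) (Fin n) ℂ)
    (hA₀ : A₀.IsHermitian) (hV : V.IsHermitian) (f : ℝ → ℝ)
    (hf_cont : Continuous f) (hf_nonneg : ∀ x, 0 ≤ f x) (hf_anti : Antitone f)
    (α₁ α₂ : ℝ) (hα : α₁ ≤ α₂) :
    ((((hA₀.add (hV.smul_real α₂)).cfc f) * V).trace).re
      ≤ ((((hA₀.add (hV.smul_real α₁)).cfc f) * V).trace).re := by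
  rcases hα.eq_or_lt with rfl | hlt
  · exact le_refl _
  · have hkey := key_ineq (hA₀.add (hV.smul_real α₂)) (hA₀.add (hV.smul_real α₁)) hf_anti
    set X := (hA₀.add (hV.smul_real α₂)).cfc f with hX
    set Y := (hA₀.add (hV.smul_real α₁)).cfc f with hY
    have hdiff : (A₀ + α₂ • V) - (A₀ + α₁ • V) = (α₂ - α₁) • V := by module
    rw [hdiff] at hkey
    have hre : (((X - Y) * ((α₂ - α₁) • V)).trace).re
        = (α₂ - α₁) * (((X * V).trace).re - ((Y * V).trace).re) := by
      rw [sub_mul, Matrix.mul_smul, Matrix.mul_smul, ← smul_sub, Matrix.trace_smul]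
      simp [Complex.real_smul, Complex.mul_re, Matrix.trace_sub]
    rw [hre] at hkey
    nlinarith [sub_pos.2 hlt]
end

section
/- Let A₀ and V be n×n Hermitian complex matrices and let f : ℝ → ℝ be continuous. Then for every α ∈ ℝ, ∫_ℝ f(λ)·ξ(λ; A₀+αV, A₀) dλ = ∫_0^α tr(f(A₀ + sV)·V) ds, where f(A) denotes the matrix obtained by applying f to A through the functional calculus and both integrals are well defined (the left integrand is bounded, measurable and compactly supported; the right integrand is continuous in s). -/
open Finset MeasureTheory

open Polynomial Matrix

namespace BSAux

attribute [local instance] Matrix.frobeniusNormedAddCommGroup Matrix.frobeniusNormedRing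
  Matrix.frobeniusNormedAlgebra

variable {n : ℕ} (A₀ V : Matrix (Fin n) (Fin n) ℂ)

lemma hasDerivAt_M (t : ℝ) : HasDerivAt (fun s : ℝ => A₀ + s • V) V t := by
  have h := ((hasDerivAt_id' t).smul_const V).const_add A₀
  rw [one_smul] at h
  exact h

lemma hasDerivAt_M_pow (k : ℕ) (t : ℝ) :
    HasDerivAt (fun s : ℝ => (A₀ + s • V) ^ k)
      (∑ i ∈ Finset.range k, (A₀ + t • V) ^ i * V * (A₀ + t • V) ^ (k - 1 - i)) t := by
  induction k with
  | zero =>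
    simp only [pow_zero, Finset.sum_range_zero]
    exact hasDerivAt_const t (1 : Matrix (Fin n) (Fin n) ℂ)
  | succ k ih =>
    have h := ih.mul (hasDerivAt_M A₀ V t)
    change HasDerivAt (fun s : ℝ => (A₀ + s • V) ^ k * (A₀ + s • V)) _ t at h
    have : (fun s : ℝ => (A₀ + s • V) ^ k * (A₀ + s • V)) =
        fun s : ℝ => (A₀ + s • V) ^ (k + 1) := by
      funext s; rw [← pow_succ]
    rw [this] at h
    convert h using 1
    rw [Finset.sum_range_succ, Finset.sum_mul]
    congr 1
    · refine Finset.sum_congr rfl fun i hi => ?_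
      rw [Finset.mem_range] at hi
      have h1 : k - 1 - i + 1 = k + 1 - 1 - i := by omega
      rw [mul_assoc (_ ^ i * V), ← pow_succ, h1]
    · simp

lemma trace_deriv_pow (B : Matrix (Fin n) (Fin n) ℂ) (k : ℕ) :
    (∑ i ∈ Finset.range k, B ^ i * V * B ^ (k - 1 - i)).trace
      = (k : ℂ) * (B ^ (k - 1) * V).trace := by
  rw [Matrix.trace_sum]
  have : ∀ i ∈ Finset.range k, (B ^ i * V * B ^ (k - 1 - i)).trace
      = (B ^ (k - 1) * V).trace := by
    intro i hi
    rw [Finset.mem_range] at hi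
    rw [Matrix.trace_mul_cycle, ← pow_add]
    have h1 : k - 1 - i + i = k - 1 := by omega
    rw [h1]
  rw [Finset.sum_congr rfl this, Finset.sum_const, Finset.card_range, nsmul_eq_mul]

end BSAux

namespace BSAux2

attribute [local instance] Matrix.frobeniusNormedAddCommGroup Matrix.frobeniusNormedRing
  Matrix.frobeniusNormedAlgebra

open BSAux

variable {n : ℕ} (A₀ V : Matrix (Fin n) (Fin n) ℂ)

noncomputable def polyMat (p : ℝ[X]) (B : Matrix (Fin n) (Fin n) ℂ) : Matrix (Fin n) (Fin n) ℂ :=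
  ∑ k ∈ Finset.range (p.natDegree + 1), (p.coeff k : ℂ) • B ^ k

lemma polyMat_eq_range (p : ℝ[X]) (B : Matrix (Fin n) (Fin n) ℂ) {N : ℕ}
    (h : p.natDegree < N) :
    polyMat p B = ∑ k ∈ Finset.range N, (p.coeff k : ℂ) • B ^ k := by
  refine Finset.sum_subset (by simp [Finset.range_subset]; omega) fun k _ hk => ?_
  rw [Finset.mem_range, not_lt] at hk
  rw [Polynomial.coeff_eq_zero_of_natDegree_lt (by omega)]
  simp

/-- The trace continuous linear map over ℝ. -/
noncomputable def traceCLM : Matrix (Fin n) (Fin n) ℂ →L[ℝ] ℂ :=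
  LinearMap.toContinuousLinearMap ((Matrix.traceLinearMap (Fin n) ℂ ℂ).restrictScalars ℝ)

@[simp] lemma traceCLM_apply (B : Matrix (Fin n) (Fin n) ℂ) : traceCLM B = B.trace := rfl

lemma hasDerivAt_polyMat (p : ℝ[X]) (t : ℝ) :
    HasDerivAt (fun s : ℝ => polyMat p (A₀ + s • V))
      (∑ k ∈ Finset.range (p.natDegree + 1), (p.coeff k : ℂ) •
        (∑ i ∈ Finset.range k, (A₀ + t • V) ^ i * V * (A₀ + t • V) ^ (k - 1 - i))) t := by
  exact HasDerivAt.fun_sum (u := Finset.range (p.natDegree + 1))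
    (A := fun k s => (p.coeff k : ℂ) • (A₀ + s • V) ^ k) fun k _ => (hasDerivAt_M_pow A₀ V k t).const_smul ((p.coeff k : ℂ))

lemma hasDerivAt_trace {g : ℝ → Matrix (Fin n) (Fin n) ℂ} {g' : Matrix (Fin n) (Fin n) ℂ}
    {t : ℝ} (h : HasDerivAt g g' t) :
    HasDerivAt (fun s => (g s).trace) g'.trace t := by
  exact (traceCLM.hasFDerivAt.comp_hasDerivAt t h)

lemma deriv_trace_eq (p : ℝ[X]) (B W : Matrix (Fin n) (Fin n) ℂ) :
    ∑ k ∈ Finset.range (p.natDegree + 1), (p.coeff k : ℂ) * ((k : ℂ) * (B ^ (k - 1) * W).trace)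
      = (polyMat p.derivative B * W).trace := by
  have hd : p.derivative.natDegree < p.natDegree + 1 :=
    lt_of_le_of_lt (Polynomial.natDegree_derivative_le p) (by omega)
  rw [polyMat_eq_range _ _ hd, Finset.sum_mul, Matrix.trace_sum]
  conv_lhs => rw [Finset.sum_range_succ']
  conv_rhs => rw [Finset.sum_range_succ]
  have h0 : (p.coeff 0 : ℂ) * (((0 : ℕ) : ℂ) * (B ^ (0 - 1) * W).trace) = 0 := by simp
  have hlast : ((p.derivative.coeff p.natDegree : ℂ) • B ^ p.natDegree * W).trace = 0 := by
    rw [Polynomial.coeff_derivative,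
      Polynomial.coeff_eq_zero_of_natDegree_lt (by omega : p.natDegree < p.natDegree + 1)]
    simp
  rw [h0, hlast, add_zero, add_zero]
  refine Finset.sum_congr rfl fun i _ => ?_
  rw [Polynomial.coeff_derivative, smul_mul_assoc, Matrix.trace_smul]
  push_cast
  simp only [Nat.add_sub_cancel, smul_eq_mul]
  ring

lemma hasDerivAt_trace_polyMat (p : ℝ[X]) (t : ℝ) :
    HasDerivAt (fun s : ℝ => (polyMat p (A₀ + s • V)).trace)
      ((polyMat p.derivative (A₀ + t • V) * V).trace) t := by
  have h := hasDerivAt_trace (hasDerivAt_polyMat A₀ V p t)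
  rw [Matrix.trace_sum] at h
  convert h using 1
  rw [← deriv_trace_eq]
  refine Finset.sum_congr rfl fun k _ => ?_
  rw [Matrix.trace_smul, trace_deriv_pow]
  simp

end BSAux2

namespace BSAux3

variable {n : ℕ} {B : Matrix (Fin n) (Fin n) ℂ} (hB : B.IsHermitian)

lemma U_mul_star : (hB.eigenvectorUnitary : Matrix (Fin n) (Fin n) ℂ)
    * star (hB.eigenvectorUnitary : Matrix (Fin n) (Fin n) ℂ) = 1 :=
  Unitary.coe_mul_star_self hB.eigenvectorUnitary

lemma star_mul_U : star (hB.eigenvectorUnitary : Matrix (Fin n) (Fin n) ℂ)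
    * (hB.eigenvectorUnitary : Matrix (Fin n) (Fin n) ℂ) = 1 :=
  Unitary.coe_star_mul_self hB.eigenvectorUnitary

lemma conj_mul_conj (d₁ d₂ : Fin n → ℂ) :
    ((hB.eigenvectorUnitary : Matrix (Fin n) (Fin n) ℂ) * Matrix.diagonal d₁
      * star (hB.eigenvectorUnitary : Matrix (Fin n) (Fin n) ℂ))
    * ((hB.eigenvectorUnitary : Matrix (Fin n) (Fin n) ℂ) * Matrix.diagonal d₂
      * star (hB.eigenvectorUnitary : Matrix (Fin n) (Fin n) ℂ))
    = (hB.eigenvectorUnitary : Matrix (Fin n) (Fin n) ℂ) * Matrix.diagonal (d₁ * d₂)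
      * star (hB.eigenvectorUnitary : Matrix (Fin n) (Fin n) ℂ) := by
  have h1 := star_mul_U hB
  calc _ = (hB.eigenvectorUnitary : Matrix (Fin n) (Fin n) ℂ) * Matrix.diagonal d₁
        * (star (hB.eigenvectorUnitary : Matrix (Fin n) (Fin n) ℂ)
          * (hB.eigenvectorUnitary : Matrix (Fin n) (Fin n) ℂ)) * Matrix.diagonal d₂
        * star (hB.eigenvectorUnitary : Matrix (Fin n) (Fin n) ℂ) := by
        simp only [mul_assoc]
    _ = _ := by
        rw [h1, mul_one, mul_assoc _ (Matrix.diagonal d₁), Matrix.diagonal_mul_diagonal]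
        rfl

lemma spec_pow (k : ℕ) :
    B ^ k = (hB.eigenvectorUnitary : Matrix (Fin n) (Fin n) ℂ)
      * Matrix.diagonal (fun j => ((hB.eigenvalues j : ℂ)) ^ k)
      * star (hB.eigenvectorUnitary : Matrix (Fin n) (Fin n) ℂ) := by
  induction k with
  | zero =>
    have h : (fun j : Fin n => ((hB.eigenvalues j : ℂ)) ^ 0) = fun _ => (1 : ℂ) := by
      funext j; simp
    rw [pow_zero, h, Matrix.diagonal_one, mul_one, U_mul_star hB]
  | succ k ih =>
    have h2 : B ^ (k + 1)
        = ((hB.eigenvectorUnitary : Matrix (Fin n) (Fin n) ℂ)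
            * Matrix.diagonal (fun j => ((hB.eigenvalues j : ℂ)) ^ k)
            * star (hB.eigenvectorUnitary : Matrix (Fin n) (Fin n) ℂ))
          * ((hB.eigenvectorUnitary : Matrix (Fin n) (Fin n) ℂ)
            * Matrix.diagonal (RCLike.ofReal ∘ hB.eigenvalues)
            * star (hB.eigenvectorUnitary : Matrix (Fin n) (Fin n) ℂ)) := by
      rw [pow_succ]
      exact congrArg₂ (· * ·) ih hB.spectral_theorem
    rw [h2, conj_mul_conj]
    have h3 : (fun j => ((hB.eigenvalues j : ℂ)) ^ k) * (RCLike.ofReal ∘ hB.eigenvalues)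
        = fun j => ((hB.eigenvalues j : ℂ)) ^ (k + 1) := by
      funext j; simp [Pi.mul_apply, Function.comp, pow_succ]
    rw [h3]

lemma diagonal_sum_smul (d : ℕ → Fin n → ℂ) (c : ℕ → ℂ) (N : ℕ) :
    ∑ k ∈ Finset.range N, c k • Matrix.diagonal (d k)
      = Matrix.diagonal (fun j => ∑ k ∈ Finset.range N, c k * d k j) := by
  induction N with
  | zero => simp [Matrix.diagonal_zero]
  | succ N ih =>
    rw [Finset.sum_range_succ, ih, ← Matrix.diagonal_smul]
    have : (Matrix.diagonal fun j => ∑ k ∈ Finset.range N, c k * d k j)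
        + Matrix.diagonal (c N • d N)
        = Matrix.diagonal (fun j => (∑ k ∈ Finset.range N, c k * d k j) + (c N • d N) j) :=
      Matrix.diagonal_add (fun j => ∑ k ∈ Finset.range N, c k * d k j) (c N • d N)
    rw [this]
    funext j
    simp [Finset.sum_range_succ]


lemma polyMat_spec (p : Polynomial ℝ) :
    BSAux2.polyMat p B = (hB.eigenvectorUnitary : Matrix (Fin n) (Fin n) ℂ)
      * Matrix.diagonal (fun j => ((p.eval (hB.eigenvalues j) : ℝ) : ℂ))
      * star (hB.eigenvectorUnitary : Matrix (Fin n) (Fin n) ℂ) := by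
  unfold BSAux2.polyMat
  have h1 : ∀ k : ℕ, (p.coeff k : ℂ) • B ^ k
      = (hB.eigenvectorUnitary : Matrix (Fin n) (Fin n) ℂ)
        * ((p.coeff k : ℂ) • Matrix.diagonal (fun j => ((hB.eigenvalues j : ℂ)) ^ k))
        * star (hB.eigenvectorUnitary : Matrix (Fin n) (Fin n) ℂ) := by
    intro k
    rw [spec_pow hB k, Matrix.mul_smul, Matrix.smul_mul]
  rw [Finset.sum_congr rfl fun k _ => h1 k, ← Finset.sum_mul, ← Finset.mul_sum,
    diagonal_sum_smul]
  have h2 : (fun j => ∑ k ∈ Finset.range (p.natDegree + 1),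
        (p.coeff k : ℂ) * ((hB.eigenvalues j : ℂ)) ^ k)
      = fun j => ((p.eval (hB.eigenvalues j) : ℝ) : ℂ) := by
    funext j
    rw [Polynomial.eval_eq_sum_range]
    push_cast
    rfl
  rw [h2]

lemma cfc_explicit (f : ℝ → ℝ) :
    hB.cfc f = (hB.eigenvectorUnitary : Matrix (Fin n) (Fin n) ℂ)
      * Matrix.diagonal (fun j => ((f (hB.eigenvalues j) : ℝ) : ℂ))
      * star (hB.eigenvectorUnitary : Matrix (Fin n) (Fin n) ℂ) := rfl

lemma trace_diagonal_mul (d : Fin n → ℂ) (W : Matrix (Fin n) (Fin n) ℂ) :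
    (Matrix.diagonal d * W).trace = ∑ j, d j * W j j := by
  simp [Matrix.trace, Matrix.diag, Matrix.diagonal_mul]

lemma trace_conj_diag (d : Fin n → ℂ) :
    ((hB.eigenvectorUnitary : Matrix (Fin n) (Fin n) ℂ) * Matrix.diagonal d
      * star (hB.eigenvectorUnitary : Matrix (Fin n) (Fin n) ℂ)).trace = ∑ j, d j := by
  rw [Matrix.trace_mul_cycle, star_mul_U hB, one_mul, Matrix.trace_diagonal]

lemma trace_conj_diag_mul (d : Fin n → ℂ) (W : Matrix (Fin n) (Fin n) ℂ) :
    (((hB.eigenvectorUnitary : Matrix (Fin n) (Fin n) ℂ) * Matrix.diagonal d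
      * star (hB.eigenvectorUnitary : Matrix (Fin n) (Fin n) ℂ)) * W).trace
    = ∑ j, d j * ((star (hB.eigenvectorUnitary : Matrix (Fin n) (Fin n) ℂ) * W
        * (hB.eigenvectorUnitary : Matrix (Fin n) (Fin n) ℂ)) j j) := by
  rw [mul_assoc, mul_assoc, Matrix.trace_mul_comm, ← mul_assoc]
  have hx : Matrix.diagonal d * star (hB.eigenvectorUnitary : Matrix (Fin n) (Fin n) ℂ) * W
      * (hB.eigenvectorUnitary : Matrix (Fin n) (Fin n) ℂ)
      = Matrix.diagonal d * (star (hB.eigenvectorUnitary : Matrix (Fin n) (Fin n) ℂ) * W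
        * (hB.eigenvectorUnitary : Matrix (Fin n) (Fin n) ℂ)) := by
    simp only [mul_assoc]
  rw [hx, trace_diagonal_mul]

noncomputable def entSum {n : ℕ} (W : Matrix (Fin n) (Fin n) ℂ) : ℝ :=
  ∑ a, ∑ b, norm (W a b)

lemma entSum_nonneg {n : ℕ} (W : Matrix (Fin n) (Fin n) ℂ) : 0 ≤ entSum W :=
  Finset.sum_nonneg fun _ _ => Finset.sum_nonneg fun _ _ => norm_nonneg _

lemma abs_entry_le_entSum {n : ℕ} (W : Matrix (Fin n) (Fin n) ℂ) (a b : Fin n) :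
    norm (W a b) ≤ entSum W := by
  calc norm (W a b) ≤ ∑ b', norm (W a b') :=
        Finset.single_le_sum (fun _ _ => norm_nonneg _) (Finset.mem_univ b)
    _ ≤ entSum W := by
        unfold entSum
        exact Finset.single_le_sum (f := fun a => ∑ b', norm (W a b'))
          (fun _ _ => Finset.sum_nonneg fun _ _ => norm_nonneg _) (Finset.mem_univ a)

lemma U_entry_abs_le_one (a j : Fin n) :
    norm ((hB.eigenvectorUnitary : Matrix (Fin n) (Fin n) ℂ) a j) ≤ 1 := by
  have h := congrFun (congrFun (star_mul_U hB) j) j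
  rw [Matrix.mul_apply] at h
  have h1 : (1 : Matrix (Fin n) (Fin n) ℂ) j j = 1 := Matrix.one_apply_eq j
  rw [h1] at h
  have h2 : ∀ a', (star (hB.eigenvectorUnitary : Matrix (Fin n) (Fin n) ℂ)) j a'
      * (hB.eigenvectorUnitary : Matrix (Fin n) (Fin n) ℂ) a' j
      = ((norm ((hB.eigenvectorUnitary : Matrix (Fin n) (Fin n) ℂ) a' j) ^ 2 : ℝ) : ℂ) := by
    intro a'
    rw [Matrix.star_apply, Complex.sq_norm]
    generalize (hB.eigenvectorUnitary : Matrix (Fin n) (Fin n) ℂ) a' j = w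
    rw [mul_comm]
    exact Complex.mul_conj w
  rw [Finset.sum_congr rfl fun a' _ => h2 a'] at h
  have h3 : (∑ a', norm ((hB.eigenvectorUnitary : Matrix (Fin n) (Fin n) ℂ) a' j) ^ 2)
      = 1 := by
    have h5 : ((∑ a', norm ((hB.eigenvectorUnitary : Matrix (Fin n) (Fin n) ℂ) a' j) ^ 2
        : ℝ) : ℂ) = 1 := by
      push_cast
      exact_mod_cast h
    exact_mod_cast h5
  have h4 : norm ((hB.eigenvectorUnitary : Matrix (Fin n) (Fin n) ℂ) a j) ^ 2 ≤ 1 := by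
    rw [← h3]
    exact Finset.single_le_sum
      (f := fun a' => norm ((hB.eigenvectorUnitary : Matrix (Fin n) (Fin n) ℂ) a' j) ^ 2)
      (fun _ _ => sq_nonneg _) (Finset.mem_univ a)
  nlinarith [norm_nonneg ((hB.eigenvectorUnitary : Matrix (Fin n) (Fin n) ℂ) a j)]

lemma conj_entry_bound (W : Matrix (Fin n) (Fin n) ℂ) (j : Fin n) :
    norm ((star (hB.eigenvectorUnitary : Matrix (Fin n) (Fin n) ℂ) * W
      * (hB.eigenvectorUnitary : Matrix (Fin n) (Fin n) ℂ)) j j) ≤ entSum W := by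
  rw [Matrix.mul_apply]
  calc norm (∑ b, (star (hB.eigenvectorUnitary : Matrix (Fin n) (Fin n) ℂ) * W) j b
        * (hB.eigenvectorUnitary : Matrix (Fin n) (Fin n) ℂ) b j)
      ≤ ∑ b, norm ((star (hB.eigenvectorUnitary : Matrix (Fin n) (Fin n) ℂ) * W) j b
        * (hB.eigenvectorUnitary : Matrix (Fin n) (Fin n) ℂ) b j) :=
        norm_sum_le _ _
    _ ≤ ∑ b, ∑ a, norm (W a b) := by
        refine Finset.sum_le_sum fun b _ => ?_
        rw [norm_mul]
        have hb1 : norm ((star (hB.eigenvectorUnitary : Matrix (Fin n) (Fin n) ℂ) * W) j b)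
            ≤ ∑ a, norm (W a b) := by
          rw [Matrix.mul_apply]
          refine le_trans (norm_sum_le _ _) (Finset.sum_le_sum fun a _ => ?_)
          rw [norm_mul, Matrix.star_apply, norm_star]
          calc norm ((hB.eigenvectorUnitary : Matrix (Fin n) (Fin n) ℂ) a j)
                * norm (W a b)
              ≤ 1 * norm (W a b) := by
                exact mul_le_mul_of_nonneg_right (U_entry_abs_le_one hB a j)
                  (norm_nonneg _)
            _ = norm (W a b) := one_mul _
        calc norm ((star (hB.eigenvectorUnitary : Matrix (Fin n) (Fin n) ℂ) * W) j b)
              * norm ((hB.eigenvectorUnitary : Matrix (Fin n) (Fin n) ℂ) b j)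
            ≤ (∑ a, norm (W a b)) * 1 := by
              refine mul_le_mul hb1 (U_entry_abs_le_one hB b j) (norm_nonneg _) ?_
              exact Finset.sum_nonneg fun _ _ => norm_nonneg _
          _ = ∑ a, norm (W a b) := mul_one _
    _ = entSum W := Finset.sum_comm

lemma eigenvalue_coe (j : Fin n) :
    ((hB.eigenvalues j : ℂ))
      = (star (hB.eigenvectorUnitary : Matrix (Fin n) (Fin n) ℂ) * B
        * (hB.eigenvectorUnitary : Matrix (Fin n) (Fin n) ℂ)) j j := by
  have hd : star (hB.eigenvectorUnitary : Matrix (Fin n) (Fin n) ℂ) * B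
      * (hB.eigenvectorUnitary : Matrix (Fin n) (Fin n) ℂ)
      = Matrix.diagonal (RCLike.ofReal ∘ hB.eigenvalues) := by
    have h := hB.conjStarAlgAut_star_eigenvectorUnitary
    rwa [Unitary.conjStarAlgAut_star_apply] at h
  rw [hd, Matrix.diagonal_apply_eq]
  rfl

lemma abs_eigenvalue_le (j : Fin n) : |hB.eigenvalues j| ≤ entSum B := by
  have h := conj_entry_bound hB B j
  rw [← eigenvalue_coe hB j, Complex.norm_real, Real.norm_eq_abs] at h
  exact h

end BSAux3

namespace BSAux4

lemma exists_antideriv (q : Polynomial ℝ) : ∃ p : Polynomial ℝ, p.derivative = q := by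
  refine ⟨q.sum fun k a => Polynomial.C (a / (k + 1)) * Polynomial.X ^ (k + 1), ?_⟩
  rw [Polynomial.sum, map_sum]
  conv_rhs => rw [← Polynomial.sum_C_mul_X_pow_eq q]
  rw [Polynomial.sum]
  refine Finset.sum_congr rfl fun k hk => ?_
  rw [Polynomial.derivative_C_mul_X_pow]
  have h1 : (k + 1 : ℕ) - 1 = k := by omega
  rw [h1]
  congr 1
  push_cast
  rw [div_mul_cancel₀]
  positivity

lemma step_integrable {f : ℝ → ℝ} (hf : Continuous f) (μ ν : ℝ) :
    Integrable (fun lam => f lam * ((if μ ≤ lam then (1:ℝ) else 0)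
      - (if ν ≤ lam then (1:ℝ) else 0))) volume ∧
    ∫ lam, f lam * ((if μ ≤ lam then (1:ℝ) else 0) - (if ν ≤ lam then (1:ℝ) else 0))
      = ∫ t in μ..ν, f t := by
  rcases le_total μ ν with hle | hle
  · have hfun : (fun lam => f lam * ((if μ ≤ lam then (1:ℝ) else 0)
        - (if ν ≤ lam then (1:ℝ) else 0))) = (Set.Ico μ ν).indicator f := by
      funext lam
      simp only [Set.indicator, Set.mem_Ico]
      by_cases h1 : μ ≤ lam <;> by_cases h2 : ν ≤ lam
      · rw [if_pos h1, if_pos h2, if_neg (fun h => absurd h.2 (not_lt.mpr h2))]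
        ring
      · rw [if_pos h1, if_neg h2, if_pos ⟨h1, not_le.mp h2⟩]
        ring
      · exact (h1 (hle.trans h2)).elim
      · rw [if_neg h1, if_neg h2, if_neg (fun h => h1 h.1)]
        ring
    have hint : IntegrableOn f (Set.Ico μ ν) volume :=
      (hf.integrableOn_Icc (a := μ) (b := ν)).mono_set Set.Ico_subset_Icc_self
    constructor
    · rw [hfun]
      exact hint.integrable_indicator measurableSet_Ico
    · rw [hfun, integral_indicator measurableSet_Ico, integral_Ico_eq_integral_Ioo,
        intervalIntegral.integral_of_le hle, integral_Ioc_eq_integral_Ioo]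
  · have hfun : (fun lam => f lam * ((if μ ≤ lam then (1:ℝ) else 0)
        - (if ν ≤ lam then (1:ℝ) else 0))) = fun lam => -((Set.Ico ν μ).indicator f lam) := by
      funext lam
      simp only [Set.indicator, Set.mem_Ico]
      by_cases h1 : μ ≤ lam <;> by_cases h2 : ν ≤ lam
      · rw [if_pos h1, if_pos h2, if_neg (fun h => absurd h.2 (not_lt.mpr h1))]
        ring
      · exact (h2 (hle.trans h1)).elim
      · rw [if_neg h1, if_pos h2, if_pos ⟨h2, not_le.mp h1⟩]
        ring
      · rw [if_neg h1, if_neg h2, if_neg (fun h => h2 h.1)]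
        ring
    have hint : IntegrableOn f (Set.Ico ν μ) volume :=
      (hf.integrableOn_Icc (a := ν) (b := μ)).mono_set Set.Ico_subset_Icc_self
    constructor
    · rw [hfun]
      exact (hint.integrable_indicator measurableSet_Ico).neg
    · rw [hfun, integral_neg, integral_indicator measurableSet_Ico,
        integral_Ico_eq_integral_Ioo, intervalIntegral.integral_symm,
        intervalIntegral.integral_of_le hle, integral_Ioc_eq_integral_Ioo]

end BSAux4

namespace BSAux5

attribute [local instance] Matrix.frobeniusNormedAddCommGroup Matrix.frobeniusNormedRing
  Matrix.frobeniusNormedAlgebra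

lemma eig_congr {n : ℕ} {B C : Matrix (Fin n) (Fin n) ℂ} (e : B = C) (hB : B.IsHermitian)
    (hC : C.IsHermitian) : hB.eigenvalues = hC.eigenvalues := by
  subst e; rfl

lemma smul_real' {n : ℕ} {V : Matrix (Fin n) (Fin n) ℂ} (hV : V.IsHermitian) (r : ℝ) :
    (r • V).IsHermitian := by
  rw [Matrix.IsHermitian, Matrix.conjTranspose_smul, star_trivial, hV]

lemma entSum_M_le {n : ℕ} (A₀ V : Matrix (Fin n) (Fin n) ℂ) (s : ℝ) :
    BSAux3.entSum (A₀ + s • V) ≤ BSAux3.entSum A₀ + |s| * BSAux3.entSum V := by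
  unfold BSAux3.entSum
  rw [Finset.mul_sum, ← Finset.sum_add_distrib]
  refine Finset.sum_le_sum fun a _ => ?_
  rw [Finset.mul_sum, ← Finset.sum_add_distrib]
  refine Finset.sum_le_sum fun b _ => ?_
  have h1 : (A₀ + s • V) a b = A₀ a b + (s : ℂ) * V a b := by
    simp [Matrix.add_apply, Matrix.smul_apply, Complex.real_smul]
  rw [h1]
  calc norm (A₀ a b + (s : ℂ) * V a b)
      ≤ norm (A₀ a b) + norm ((s : ℂ) * V a b) := norm_add_le _ _
    _ = norm (A₀ a b) + |s| * norm (V a b) := by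
        rw [norm_mul, Complex.norm_real, Real.norm_eq_abs]

theorem keyB {n : ℕ} (A₀ V : Matrix (Fin n) (Fin n) ℂ) (hA₀ : A₀.IsHermitian)
    (hV : V.IsHermitian) (f : ℝ → ℝ) (hf : Continuous f) (α : ℝ) :
    ∫ s in (0:ℝ)..α, ((((hA₀.add (hV.smul_real s)).cfc f) * V).trace).re
      = (∑ j, ∫ t in (0:ℝ)..((hA₀.add (hV.smul_real α)).eigenvalues j), f t)
        - ∑ j, ∫ t in (0:ℝ)..((hA₀.add (hV.smul_real 0)).eigenvalues j), f t := by
  classical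
  set R : ℝ := BSAux3.entSum A₀ + (|α| + 1) * BSAux3.entSum V with hRdef
  have hR0 : 0 ≤ R := by
    have := BSAux3.entSum_nonneg A₀
    have := BSAux3.entSum_nonneg V
    have : (0:ℝ) ≤ |α| + 1 := by positivity
    nlinarith [BSAux3.entSum_nonneg A₀, BSAux3.entSum_nonneg V]
  have hlam_mem : ∀ s : ℝ, |s| ≤ |α| + 1 →
      ∀ j, |(hA₀.add (hV.smul_real s)).eigenvalues j| ≤ R := by
    intro s hs j
    have h1 := BSAux3.abs_eigenvalue_le (hA₀.add (hV.smul_real s)) j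
    have h2 := entSum_M_le A₀ V s
    have h3 : |s| * BSAux3.entSum V ≤ (|α| + 1) * BSAux3.entSum V :=
      mul_le_mul_of_nonneg_right hs (BSAux3.entSum_nonneg V)
    rw [hRdef]
    linarith
  -- Weierstrass approximation and polynomial antiderivatives
  have hQ : ∀ k : ℕ, ∃ qq : Polynomial ℝ, ∀ x ∈ Set.Icc (-R) R,
      |qq.eval x - f x| < 1 / (k + 1) :=
    fun k => exists_polynomial_near_of_continuousOn (-R) R f hf.continuousOn _ (by positivity)
  choose q hq using hQ
  choose p hp using fun k => BSAux4.exists_antideriv (q k)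
  -- derivative of the polynomial trace functions
  have hFk_deriv : ∀ (k : ℕ) (s : ℝ),
      HasDerivAt (fun s' : ℝ => ((BSAux2.polyMat (p k) (A₀ + s' • V)).trace).re
          - ((BSAux2.polyMat (p k) (A₀ + (0:ℝ) • V)).trace).re)
        (((BSAux2.polyMat (q k) (A₀ + s • V) * V).trace).re) s := by
    intro k s
    have h1 := BSAux2.hasDerivAt_trace_polyMat A₀ V (p k) s
    rw [hp k] at h1
    have h2 := Complex.reCLM.hasFDerivAt.comp_hasDerivAt s h1
    simpa using h2.sub_const (((BSAux2.polyMat (p k) (A₀ + (0:ℝ) • V)).trace).re)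
  -- continuity of approximating integrands
  have hk_cont : ∀ k : ℕ,
      Continuous fun s : ℝ => ((BSAux2.polyMat (q k) (A₀ + s • V) * V).trace).re := by
    intro k
    refine continuous_iff_continuousAt.mpr fun s => ?_
    have h1 := (BSAux2.hasDerivAt_polyMat A₀ V (q k) s).mul_const V
    have h2 := BSAux2.hasDerivAt_trace h1
    have h3 := Complex.reCLM.hasFDerivAt.comp_hasDerivAt s h2
    exact h3.continuousAt
  -- trace identities
  have tr1 : ∀ (pp : Polynomial ℝ) (s : ℝ), (BSAux2.polyMat pp (A₀ + s • V)).trace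
      = ∑ j, ((pp.eval ((hA₀.add (hV.smul_real s)).eigenvalues j) : ℝ) : ℂ) := by
    intro pp s
    rw [BSAux3.polyMat_spec (hA₀.add (hV.smul_real s)) pp, BSAux3.trace_conj_diag]
  have tr2 : ∀ (pp : Polynomial ℝ) (s : ℝ), (BSAux2.polyMat pp (A₀ + s • V) * V).trace
      = ∑ j, ((pp.eval ((hA₀.add (hV.smul_real s)).eigenvalues j) : ℝ) : ℂ)
        * ((star ((hA₀.add (hV.smul_real s)).eigenvectorUnitary : Matrix (Fin n) (Fin n) ℂ)
            * V * ((hA₀.add (hV.smul_real s)).eigenvectorUnitary : Matrix (Fin n) (Fin n) ℂ))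
            j j) := by
    intro pp s
    rw [BSAux3.polyMat_spec (hA₀.add (hV.smul_real s)) pp, BSAux3.trace_conj_diag_mul]
  have tr3 : ∀ s : ℝ, (((hA₀.add (hV.smul_real s)).cfc f) * V).trace
      = ∑ j, ((f ((hA₀.add (hV.smul_real s)).eigenvalues j) : ℝ) : ℂ)
        * ((star ((hA₀.add (hV.smul_real s)).eigenvectorUnitary : Matrix (Fin n) (Fin n) ℂ)
            * V * ((hA₀.add (hV.smul_real s)).eigenvectorUnitary : Matrix (Fin n) (Fin n) ℂ))
            j j) := by
    intro s
    rw [BSAux3.cfc_explicit (hA₀.add (hV.smul_real s)) f, BSAux3.trace_conj_diag_mul]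
  have hw : ∀ (s : ℝ) (j : Fin n),
      norm ((star ((hA₀.add (hV.smul_real s)).eigenvectorUnitary
          : Matrix (Fin n) (Fin n) ℂ) * V
        * ((hA₀.add (hV.smul_real s)).eigenvectorUnitary : Matrix (Fin n) (Fin n) ℂ)) j j)
      ≤ BSAux3.entSum V :=
    fun s j => BSAux3.conj_entry_bound (hA₀.add (hV.smul_real s)) V j
  -- uniform convergence of the derivatives
  have hunif : TendstoUniformlyOn
      (fun (k : ℕ) (s : ℝ) => ((BSAux2.polyMat (q k) (A₀ + s • V) * V).trace).re)
      (fun s : ℝ => ((((hA₀.add (hV.smul_real s)).cfc f) * V).trace).re) Filter.atTop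
      (Set.Ioo (-(|α| + 1)) (|α| + 1)) := by
    rw [Metric.tendstoUniformlyOn_iff]
    intro ε hε
    have hc : Filter.Tendsto (fun k : ℕ => (n : ℝ) * BSAux3.entSum V * (1 / (k + 1)))
        Filter.atTop (nhds 0) := by
      simpa using tendsto_one_div_add_atTop_nhds_zero_nat.const_mul
        ((n : ℝ) * BSAux3.entSum V)
    filter_upwards [hc.eventually_lt_const hε] with k hk
    intro s hs
    have hsmem : |s| ≤ |α| + 1 := by
      rw [Set.mem_Ioo] at hs
      rw [abs_le]
      constructor <;> linarith [hs.1, hs.2]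
    rw [Real.dist_eq, tr2, tr3, ← Complex.sub_re, ← Finset.sum_sub_distrib]
    have hre : |(∑ j, (((f ((hA₀.add (hV.smul_real s)).eigenvalues j) : ℝ) : ℂ)
          * ((star ((hA₀.add (hV.smul_real s)).eigenvectorUnitary : Matrix (Fin n) (Fin n) ℂ)
            * V * ((hA₀.add (hV.smul_real s)).eigenvectorUnitary : Matrix (Fin n) (Fin n) ℂ))
            j j)
          - (((q k).eval ((hA₀.add (hV.smul_real s)).eigenvalues j) : ℝ) : ℂ)
          * ((star ((hA₀.add (hV.smul_real s)).eigenvectorUnitary : Matrix (Fin n) (Fin n) ℂ)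
            * V * ((hA₀.add (hV.smul_real s)).eigenvectorUnitary : Matrix (Fin n) (Fin n) ℂ))
            j j))).re|
        ≤ (n : ℝ) * BSAux3.entSum V * (1 / (k + 1)) := by
      refine le_trans (Complex.abs_re_le_norm _) ?_
      refine le_trans (norm_sum_le _ _) ?_
      have hTerm : ∀ j : Fin n, norm
          ((((f ((hA₀.add (hV.smul_real s)).eigenvalues j) : ℝ) : ℂ)
            * ((star ((hA₀.add (hV.smul_real s)).eigenvectorUnitary
                : Matrix (Fin n) (Fin n) ℂ) * V
              * ((hA₀.add (hV.smul_real s)).eigenvectorUnitary : Matrix (Fin n) (Fin n) ℂ))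
              j j)
            - (((q k).eval ((hA₀.add (hV.smul_real s)).eigenvalues j) : ℝ) : ℂ)
            * ((star ((hA₀.add (hV.smul_real s)).eigenvectorUnitary
                : Matrix (Fin n) (Fin n) ℂ) * V
              * ((hA₀.add (hV.smul_real s)).eigenvectorUnitary : Matrix (Fin n) (Fin n) ℂ))
              j j)))
          ≤ BSAux3.entSum V * (1 / (k + 1)) := by
        intro j
        rw [← sub_mul, norm_mul]
        have hx : ((hA₀.add (hV.smul_real s)).eigenvalues j) ∈ Set.Icc (-R) R := by
          rw [Set.mem_Icc, ← abs_le]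
          exact hlam_mem s hsmem j
        have h1 : norm (((f ((hA₀.add (hV.smul_real s)).eigenvalues j) : ℝ) : ℂ)
            - (((q k).eval ((hA₀.add (hV.smul_real s)).eigenvalues j) : ℝ) : ℂ)) ≤ 1 / (k + 1) := by
          rw [← Complex.ofReal_sub, Complex.norm_real, Real.norm_eq_abs, abs_sub_comm]
          exact le_of_lt (hq k _ hx)
        calc _ ≤ (1 / (k + 1 : ℝ)) * norm _ :=
              mul_le_mul_of_nonneg_right h1 (norm_nonneg _)
          _ ≤ (1 / (k + 1 : ℝ)) * BSAux3.entSum V := by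
              refine mul_le_mul_of_nonneg_left (hw s j) (by positivity)
          _ = BSAux3.entSum V * (1 / (k + 1)) := by ring
      refine le_trans (Finset.sum_le_sum fun j _ => hTerm j) ?_
      rw [Finset.sum_const, Finset.card_univ, Fintype.card_fin, nsmul_eq_mul]
      ring_nf
      exact le_refl _
    exact lt_of_le_of_lt hre hk
  -- FTC for polynomials
  have hftc : ∀ (k : ℕ) (x : ℝ), (∫ t in (0:ℝ)..x, (q k).eval t)
      = (p k).eval x - (p k).eval 0 := by
    intro k x
    refine intervalIntegral.integral_eq_sub_of_hasDerivAt (f := fun y => (p k).eval y)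
      (f' := fun y => (q k).eval y) (fun t _ => ?_)
      ((Polynomial.continuous (q k)).intervalIntegrable _ _)
    simpa [hp k] using Polynomial.hasDerivAt (p k) t
  have hptBound : ∀ (k : ℕ) (x : ℝ), |x| ≤ R →
      |((p k).eval x - (p k).eval 0) - ∫ t in (0:ℝ)..x, f t| ≤ R * (1 / (k + 1)) := by
    intro k x hx
    rw [← hftc k x, ← intervalIntegral.integral_sub
      ((Polynomial.continuous (q k)).intervalIntegrable _ _) (hf.intervalIntegrable _ _)]
    have hb : ‖∫ t in (0:ℝ)..x, ((q k).eval t - f t)‖ ≤ (1 / (k + 1)) * |x - 0| := by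
      refine intervalIntegral.norm_integral_le_of_norm_le_const fun t ht => ?_
      have htI : t ∈ Set.Icc (-R) R := by
        have h1 : (0:ℝ) ⊓ x < t := ht.1
        have h2 : t ≤ (0:ℝ) ⊔ x := ht.2
        have hax := abs_le.mp hx
        constructor
        · have hmin : -R ≤ (0:ℝ) ⊓ x := le_inf_iff.mpr ⟨by linarith, by linarith [hax.1]⟩
          linarith
        · have hmax : (0:ℝ) ⊔ x ≤ R := sup_le_iff.mpr ⟨hR0, hax.2⟩
          linarith
      rw [Real.norm_eq_abs]
      exact le_of_lt (hq k t htI)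
    rw [← Real.norm_eq_abs]
    calc ‖∫ t in (0:ℝ)..x, ((q k).eval t - f t)‖ ≤ (1 / (k + 1)) * |x - 0| := hb
      _ ≤ (1 / (k + 1)) * R := by
          refine mul_le_mul_of_nonneg_left ?_ (by positivity)
          simpa using hx
      _ = R * (1 / (k + 1)) := by ring
  -- pointwise convergence
  have hpt : ∀ s ∈ Set.Ioo (-(|α| + 1)) (|α| + 1),
      Filter.Tendsto (fun k : ℕ => ((BSAux2.polyMat (p k) (A₀ + s • V)).trace).re
          - ((BSAux2.polyMat (p k) (A₀ + (0:ℝ) • V)).trace).re) Filter.atTop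
        (nhds ((∑ j, ∫ t in (0:ℝ)..((hA₀.add (hV.smul_real s)).eigenvalues j), f t)
          - ∑ j, ∫ t in (0:ℝ)..((hA₀.add (hV.smul_real 0)).eigenvalues j), f t)) := by
    intro s hs
    have hsmem : |s| ≤ |α| + 1 := by
      rw [Set.mem_Ioo] at hs
      rw [abs_le]
      constructor <;> linarith [hs.1, hs.2]
    have h0mem : |(0:ℝ)| ≤ |α| + 1 := by simp; positivity
    have hbnd : ∀ (k : ℕ) (u : ℝ), |u| ≤ |α| + 1 →
        |(∑ j, (p k).eval ((hA₀.add (hV.smul_real u)).eigenvalues j))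
          - ((n : ℝ) * (p k).eval 0
            + ∑ j, ∫ t in (0:ℝ)..((hA₀.add (hV.smul_real u)).eigenvalues j), f t)|
        ≤ (n : ℝ) * (R * (1 / (k + 1))) := by
      intro k u hu
      have hsplit : (∑ j, (p k).eval ((hA₀.add (hV.smul_real u)).eigenvalues j))
          - ((n : ℝ) * (p k).eval 0
            + ∑ j, ∫ t in (0:ℝ)..((hA₀.add (hV.smul_real u)).eigenvalues j), f t)
          = ∑ j, (((p k).eval ((hA₀.add (hV.smul_real u)).eigenvalues j) - (p k).eval 0)
            - ∫ t in (0:ℝ)..((hA₀.add (hV.smul_real u)).eigenvalues j), f t) := by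
        rw [Finset.sum_sub_distrib, Finset.sum_sub_distrib, Finset.sum_const,
          Finset.card_univ, Fintype.card_fin, nsmul_eq_mul]
        ring
      rw [hsplit]
      refine le_trans (Finset.abs_sum_le_sum_abs _ _) ?_
      have hterm : ∀ j : Fin n,
          |(((p k).eval ((hA₀.add (hV.smul_real u)).eigenvalues j) - (p k).eval 0)
            - ∫ t in (0:ℝ)..((hA₀.add (hV.smul_real u)).eigenvalues j), f t)|
          ≤ R * (1 / (k + 1)) := fun j => hptBound k _ (hlam_mem u hu j)
      refine le_trans (Finset.sum_le_sum fun j _ => hterm j) ?_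
      rw [Finset.sum_const, Finset.card_univ, Fintype.card_fin, nsmul_eq_mul]
    rw [tendsto_iff_dist_tendsto_zero]
    refine squeeze_zero (fun k => dist_nonneg)
      (g := fun k : ℕ => 2 * (n : ℝ) * R * (1 / (k + 1))) (fun k => ?_) ?_
    · rw [Real.dist_eq, tr1, tr1, Complex.re_sum, Complex.re_sum]
      simp only [Complex.ofReal_re]
      have hiden : (∑ j, (p k).eval ((hA₀.add (hV.smul_real s)).eigenvalues j))
          - (∑ j, (p k).eval ((hA₀.add (hV.smul_real 0)).eigenvalues j))
          - ((∑ j, ∫ t in (0:ℝ)..((hA₀.add (hV.smul_real s)).eigenvalues j), f t)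
            - ∑ j, ∫ t in (0:ℝ)..((hA₀.add (hV.smul_real 0)).eigenvalues j), f t)
          = ((∑ j, (p k).eval ((hA₀.add (hV.smul_real s)).eigenvalues j))
              - ((n : ℝ) * (p k).eval 0
                + ∑ j, ∫ t in (0:ℝ)..((hA₀.add (hV.smul_real s)).eigenvalues j), f t))
            - ((∑ j, (p k).eval ((hA₀.add (hV.smul_real 0)).eigenvalues j))
              - ((n : ℝ) * (p k).eval 0
                + ∑ j, ∫ t in (0:ℝ)..((hA₀.add (hV.smul_real 0)).eigenvalues j), f t)) := by
        ring
      rw [hiden]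
      refine le_trans (abs_sub _ _) ?_
      have h1 := hbnd k s hsmem
      have h2 := hbnd k 0 h0mem
      calc _ ≤ (n : ℝ) * (R * (1 / (k + 1))) + (n : ℝ) * (R * (1 / (k + 1))) := add_le_add h1 h2
        _ = 2 * (n : ℝ) * R * (1 / (k + 1)) := by ring
    · simpa using tendsto_one_div_add_atTop_nhds_zero_nat.const_mul (2 * (n : ℝ) * R)
  -- conclusion: FTC
  have hsub : Set.uIcc (0:ℝ) α ⊆ Set.Ioo (-(|α| + 1)) (|α| + 1) := by
    intro x hx
    rw [Set.mem_Ioo]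
    rcases Set.mem_uIcc.mp hx with ⟨h1, h2⟩ | ⟨h1, h2⟩ <;>
      constructor <;> nlinarith [le_abs_self α, neg_abs_le α, abs_nonneg α]
  have hglderiv : ∀ x ∈ Set.uIcc (0:ℝ) α,
      HasDerivAt (fun s : ℝ =>
          (∑ j, ∫ t in (0:ℝ)..((hA₀.add (hV.smul_real s)).eigenvalues j), f t)
          - ∑ j, ∫ t in (0:ℝ)..((hA₀.add (hV.smul_real 0)).eigenvalues j), f t)
        (((((hA₀.add (hV.smul_real x)).cfc f) * V).trace).re) x := by
    intro x hx
    exact hasDerivAt_of_tendstoUniformlyOn isOpen_Ioo hunif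
      (Filter.Eventually.of_forall fun k => fun y _ => hFk_deriv k y) hpt (hsub hx)
  have hcont : ContinuousOn (fun s : ℝ => ((((hA₀.add (hV.smul_real s)).cfc f) * V).trace).re)
      (Set.Ioo (-(|α| + 1)) (|α| + 1)) :=
    hunif.continuousOn (Filter.Eventually.of_forall fun k => (hk_cont k).continuousOn).frequently
  have hii : IntervalIntegrable
      (fun s : ℝ => ((((hA₀.add (hV.smul_real s)).cfc f) * V).trace).re) volume 0 α :=
    (hcont.mono hsub).intervalIntegrable
  have hmain := intervalIntegral.integral_eq_sub_of_hasDerivAt hglderiv hii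
  rw [hmain]
  ring

end BSAux5

/-- **Birman–Solomyak formula** (finite-dimensional case): for Hermitian matrices `A₀`, `V`,
continuous `f : ℝ → ℝ` and `α ∈ ℝ`,
`∫_ℝ f(λ) ξ(λ; A₀+αV, A₀) dλ = ∫_0^α tr (f(A₀+sV) V) ds`, where `f` is applied to a Hermitian
matrix via the functional calculus. -/
theorem birman_solomyak_formula {n : ℕ} (A₀ V : Matrix (Fin n) (Fin n) ℂ)
    (hA₀ : A₀.IsHermitian) (hV : V.IsHermitian) (f : ℝ → ℝ) (hf_cont : Continuous f)
    (α : ℝ) :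
    ∫ lam, f lam * ssf (hA₀.add (hV.smul_real α)) hA₀ lam
      = ∫ s in (0 : ℝ)..α, ((((hA₀.add (hV.smul_real s)).cfc f) * V).trace).re := by
  classical
  rw [BSAux5.keyB A₀ V hA₀ hV f hf_cont α]
  have he : (hA₀.add (hV.smul_real 0)).eigenvalues = hA₀.eigenvalues :=
    BSAux5.eig_congr (by simp) _ _
  rw [he]
  have hfun : (fun lam => f lam * ssf (hA₀.add (hV.smul_real α)) hA₀ lam)
      = fun lam => ∑ j, f lam * ((if hA₀.eigenvalues j ≤ lam then (1:ℝ) else 0)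
          - (if (hA₀.add (hV.smul_real α)).eigenvalues j ≤ lam then (1:ℝ) else 0)) := by
    funext lam
    unfold ssf countLE
    rw [Finset.card_filter, Finset.card_filter]
    push_cast
    rw [← Finset.sum_sub_distrib, Finset.mul_sum]
  rw [hfun]
  rw [integral_finset_sum Finset.univ
    (fun j _ => (BSAux4.step_integrable hf_cont (hA₀.eigenvalues j)
      ((hA₀.add (hV.smul_real α)).eigenvalues j)).1)]
  have hsum : ∀ j : Fin n, (∫ lam, f lam * ((if hA₀.eigenvalues j ≤ lam then (1:ℝ) else 0)
          - (if (hA₀.add (hV.smul_real α)).eigenvalues j ≤ lam then (1:ℝ) else 0)))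
      = (∫ t in (0:ℝ)..((hA₀.add (hV.smul_real α)).eigenvalues j), f t)
        - ∫ t in (0:ℝ)..(hA₀.eigenvalues j), f t := by
    intro j
    rw [(BSAux4.step_integrable hf_cont (hA₀.eigenvalues j)
      ((hA₀.add (hV.smul_real α)).eigenvalues j)).2]
    exact (intervalIntegral.integral_interval_sub_left
      (hf_cont.intervalIntegrable _ _) (hf_cont.intervalIntegrable _ _)).symm
  rw [Finset.sum_congr rfl fun j _ => hsum j, Finset.sum_sub_distrib]
end

section
/- Let A₀ be an n×n Hermitian complex matrix, let f : ℝ → ℝ be nonnegative, nonincreasing and bounded, and define g(V) = ∫_ℝ f(λ)·ξ(λ; A₀+V, A₀) dλ for Hermitian V. If V₁ and V₂ are Hermitian matrices with V₁ ≤ V₂ in the Loewner order (V₂ − V₁ positive semidefinite), then g(V₁) ≤ g(V₂); that is, g is nondecreasing with respect to the perturbation. -/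
open Finset MeasureTheory

open Matrix Module

variable {n : ℕ}

private lemma eigdot {M : Matrix (Fin n) (Fin n) ℂ} (hM : M.IsHermitian) (i j : Fin n) :
    star ⇑(hM.eigenvectorBasis i) ⬝ᵥ ⇑(hM.eigenvectorBasis j) = if i = j then 1 else 0 := by
  have h := orthonormal_iff_ite.mp hM.eigenvectorBasis.orthonormal i j
  rw [EuclideanSpace.inner_eq_star_dotProduct] at h
  rw [dotProduct_comm]
  simpa [WithLp.equiv] using h

private lemma sum_dot {ι : Type*} (s : Finset ι) (v : ι → (Fin n → ℂ)) (w : Fin n → ℂ) :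
    (∑ i ∈ s, v i) ⬝ᵥ w = ∑ i ∈ s, v i ⬝ᵥ w := by
  simp only [dotProduct, Finset.sum_apply, Finset.sum_mul]
  exact Finset.sum_comm

private lemma dot_sum {ι : Type*} (s : Finset ι) (v : ι → (Fin n → ℂ)) (w : Fin n → ℂ) :
    w ⬝ᵥ (∑ i ∈ s, v i) = ∑ i ∈ s, w ⬝ᵥ v i := by
  simp only [dotProduct, Finset.sum_apply, Finset.mul_sum]
  exact Finset.sum_comm

private lemma dot_sum_sum {M : Matrix (Fin n) (Fin n) ℂ} (hM : M.IsHermitian)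
    (s : Finset (Fin n)) (c d : Fin n → ℂ) :
    star (∑ j ∈ s, c j • ⇑(hM.eigenvectorBasis j)) ⬝ᵥ (∑ j ∈ s, d j • ⇑(hM.eigenvectorBasis j))
      = ∑ j ∈ s, (starRingEnd ℂ) (c j) * d j := by
  rw [star_sum, sum_dot]
  have : ∀ i ∈ s, star (c i • ⇑(hM.eigenvectorBasis i)) ⬝ᵥ (∑ j ∈ s, d j • ⇑(hM.eigenvectorBasis j))
      = (starRingEnd ℂ) (c i) * d i := by
    intro i hi
    rw [star_smul, smul_dotProduct, dot_sum]
    have : ∀ j ∈ s, star ⇑(hM.eigenvectorBasis i) ⬝ᵥ (d j • ⇑(hM.eigenvectorBasis j))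
        = if i = j then d j else 0 := by
      intro j hj
      rw [dotProduct_smul, eigdot hM i j]
      simp [smul_eq_mul, mul_ite]
    rw [Finset.sum_congr rfl this, Finset.sum_ite_eq s i d, if_pos hi]
    simp [smul_eq_mul]
  rw [Finset.sum_congr rfl this]

private lemma quad_eigen {M : Matrix (Fin n) (Fin n) ℂ} (hM : M.IsHermitian)
    (s : Finset (Fin n)) (c : Fin n → ℂ) :
    star (∑ j ∈ s, c j • ⇑(hM.eigenvectorBasis j)) ⬝ᵥ
        (M *ᵥ ∑ j ∈ s, c j • ⇑(hM.eigenvectorBasis j))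
      = ((∑ j ∈ s, hM.eigenvalues j * ‖c j‖ ^ 2 : ℝ) : ℂ) := by
  have h1 : M *ᵥ (∑ j ∈ s, c j • ⇑(hM.eigenvectorBasis j))
      = ∑ j ∈ s, (((hM.eigenvalues j : ℂ)) * c j) • ⇑(hM.eigenvectorBasis j) := by
    rw [← M.mulVecLin_apply, map_sum]
    refine Finset.sum_congr rfl fun j hj => ?_
    rw [_root_.map_smul, M.mulVecLin_apply, hM.mulVec_eigenvectorBasis,
      RCLike.real_smul_eq_coe_smul (K := ℂ), smul_smul, mul_comm]
    rfl
  rw [h1, dot_sum_sum hM s c, Complex.ofReal_sum]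
  refine Finset.sum_congr rfl fun j hj => ?_
  rw [mul_comm ((hM.eigenvalues j : ℂ)) (c j), ← mul_assoc,
    ← Complex.normSq_eq_conj_mul_self, Complex.normSq_eq_norm_sq]
  norm_cast
  ring

private lemma norm_eigen {M : Matrix (Fin n) (Fin n) ℂ} (hM : M.IsHermitian)
    (s : Finset (Fin n)) (c : Fin n → ℂ) :
    star (∑ j ∈ s, c j • ⇑(hM.eigenvectorBasis j)) ⬝ᵥ (∑ j ∈ s, c j • ⇑(hM.eigenvectorBasis j))
      = ((∑ j ∈ s, ‖c j‖ ^ 2 : ℝ) : ℂ) := by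
  rw [dot_sum_sum hM s c, Complex.ofReal_sum]
  refine Finset.sum_congr rfl fun j hj => ?_
  rw [← Complex.normSq_eq_conj_mul_self, Complex.normSq_eq_norm_sq]

open ComplexOrder in
private lemma countLE_le_of_posSemidef {A B : Matrix (Fin n) (Fin n) ℂ}
    (hA : A.IsHermitian) (hB : B.IsHermitian) (hAB : (B - A).PosSemidef) (lam : ℝ) :
    countLE hB lam ≤ countLE hA lam := by
  classical
  by_contra hcon
  push_neg at hcon
  set uA := hA.eigenvectorBasis with huA
  set uB := hB.eigenvectorBasis with huB
  set sB : Finset (Fin n) := Finset.univ.filter (fun j => hB.eigenvalues j ≤ lam) with hsB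
  set sA : Finset (Fin n) := Finset.univ.filter (fun j => ¬ hA.eigenvalues j ≤ lam) with hsA
  have hinjB : Function.Injective uB := by
    have := uB.toBasis.injective
    rwa [OrthonormalBasis.coe_toBasis] at this
  have hinjA : Function.Injective uA := by
    have := uA.toBasis.injective
    rwa [OrthonormalBasis.coe_toBasis] at this
  set S : Submodule ℂ (EuclideanSpace ℂ (Fin n)) := Submodule.span ℂ ↑(sB.image uB) with hS
  set T : Submodule ℂ (EuclideanSpace ℂ (Fin n)) := Submodule.span ℂ ↑(sA.image uA) with hT
  have hliB : LinearIndependent ℂ (Subtype.val : (↑(sB.image uB) : Set (EuclideanSpace ℂ (Fin n))) → EuclideanSpace ℂ (Fin n)) := by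
    have h1 : LinearIndependent ℂ ⇑uB := by
      have := uB.toBasis.linearIndependent
      rwa [OrthonormalBasis.coe_toBasis] at this
    refine LinearIndepOn.mono (v := id) ((linearIndepOn_id_range_iff hinjB).mpr h1) ?_
    rw [Finset.coe_image]
    exact Set.image_subset_range _ _
  have hliA : LinearIndependent ℂ (Subtype.val : (↑(sA.image uA) : Set (EuclideanSpace ℂ (Fin n))) → EuclideanSpace ℂ (Fin n)) := by
    have h1 : LinearIndependent ℂ ⇑uA := by
      have := uA.toBasis.linearIndependent
      rwa [OrthonormalBasis.coe_toBasis] at this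
    refine LinearIndepOn.mono (v := id) ((linearIndepOn_id_range_iff hinjA).mpr h1) ?_
    rw [Finset.coe_image]
    exact Set.image_subset_range _ _
  have hfrS : finrank ℂ S = countLE hB lam := by
    rw [hS, finrank_span_finset_eq_card hliB, Finset.card_image_of_injective _ hinjB]
    rfl
  have hfrT : finrank ℂ T = n - countLE hA lam := by
    rw [hT, finrank_span_finset_eq_card hliA, Finset.card_image_of_injective _ hinjA]
    have := Finset.card_filter_add_card_filter_not
      (s := (Finset.univ : Finset (Fin n))) (p := fun j => hA.eigenvalues j ≤ lam)
    simp only [Finset.card_univ, Fintype.card_fin] at this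
    rw [hsA, countLE]
    omega
  have hcB : countLE hB lam ≤ n := by
    rw [countLE]
    calc _ ≤ (Finset.univ : Finset (Fin n)).card := Finset.card_le_card (Finset.filter_subset _ _)
    _ = n := by simp
  have hsum := Submodule.finrank_sup_add_finrank_inf_eq S T
  have hST : finrank ℂ ↥(S ⊔ T) ≤ n := by
    calc _ ≤ finrank ℂ (EuclideanSpace ℂ (Fin n)) := Submodule.finrank_le _
    _ = n := finrank_euclideanSpace_fin
  have hpos : 0 < finrank ℂ ↥(S ⊓ T) := by omega
  have hne : S ⊓ T ≠ ⊥ := by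
    intro h
    rw [h, finrank_bot] at hpos
    exact lt_irrefl 0 hpos
  obtain ⟨x, hxST, hx0⟩ := Submodule.exists_mem_ne_zero_of_ne_bot hne
  obtain ⟨hxS, hxT⟩ := Submodule.mem_inf.mp hxST
  rw [hS, Submodule.mem_span_finset] at hxS
  rw [hT, Submodule.mem_span_finset] at hxT
  obtain ⟨fB, -, hfB⟩ := hxS
  obtain ⟨fA, -, hfA⟩ := hxT
  have hrepB : x = ∑ j ∈ sB, fB (uB j) • uB j := by
    rw [← hfB, Finset.sum_image (fun a _ b _ h => hinjB h)]
  have hrepA : x = ∑ j ∈ sA, fA (uA j) • uA j := by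
    rw [← hfA, Finset.sum_image (fun a _ b _ h => hinjA h)]
  set y : Fin n → ℂ := (WithLp.equiv 2 (Fin n → ℂ)) x with hy
  have hyB : y = ∑ j ∈ sB, fB (uB j) • ⇑(uB j) := by rw [hy, hrepB]; simp [WithLp.ofLp_sum]
  have hyA : y = ∑ j ∈ sA, fA (uA j) • ⇑(uA j) := by rw [hy, hrepA]; simp [WithLp.ofLp_sum]
  have hy0 : y ≠ 0 := by
    intro h
    exact hx0 ((WithLp.equiv 2 (Fin n → ℂ)).injective (by simpa [← hy] using h))
  have hQB : star y ⬝ᵥ (B *ᵥ y)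
      = ((∑ j ∈ sB, hB.eigenvalues j * ‖fB (uB j)‖ ^ 2 : ℝ) : ℂ) := by
    rw [hyB]; exact quad_eigen hB sB fun j => fB (uB j)
  have hQA : star y ⬝ᵥ (A *ᵥ y)
      = ((∑ j ∈ sA, hA.eigenvalues j * ‖fA (uA j)‖ ^ 2 : ℝ) : ℂ) := by
    rw [hyA]; exact quad_eigen hA sA fun j => fA (uA j)
  have hNB : star y ⬝ᵥ y = ((∑ j ∈ sB, ‖fB (uB j)‖ ^ 2 : ℝ) : ℂ) := by
    rw [hyB]; exact norm_eigen hB sB fun j => fB (uB j)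
  have hNA : star y ⬝ᵥ y = ((∑ j ∈ sA, ‖fA (uA j)‖ ^ 2 : ℝ) : ℂ) := by
    rw [hyA]; exact norm_eigen hA sA fun j => fA (uA j)
  have hN : (∑ j ∈ sB, ‖fB (uB j)‖ ^ 2) = (∑ j ∈ sA, ‖fA (uA j)‖ ^ 2) := by
    have := hNB.symm.trans hNA
    exact_mod_cast this
  have h1 : (∑ j ∈ sB, hB.eigenvalues j * ‖fB (uB j)‖ ^ 2)
      ≤ lam * ∑ j ∈ sB, ‖fB (uB j)‖ ^ 2 := by
    rw [Finset.mul_sum]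
    refine Finset.sum_le_sum fun j hj => ?_
    have hj' : hB.eigenvalues j ≤ lam := by
      rw [hsB, Finset.mem_filter] at hj
      exact hj.2
    exact mul_le_mul_of_nonneg_right hj' (sq_nonneg _)
  have hex : ∃ j ∈ sA, fA (uA j) ≠ 0 := by
    by_contra hno
    push_neg at hno
    exact hy0 (by rw [hyA]; exact Finset.sum_eq_zero fun j hj => by rw [hno j hj, zero_smul])
  obtain ⟨j₀, hj₀, hj₀0⟩ := hex
  have h2 : lam * (∑ j ∈ sA, ‖fA (uA j)‖ ^ 2)
      < ∑ j ∈ sA, hA.eigenvalues j * ‖fA (uA j)‖ ^ 2 := by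
    rw [Finset.mul_sum]
    refine Finset.sum_lt_sum (fun j hj => ?_) ⟨j₀, hj₀, ?_⟩
    · have hj' : lam < hA.eigenvalues j := by
        rw [hsA, Finset.mem_filter] at hj
        exact not_le.mp hj.2
      exact mul_le_mul_of_nonneg_right hj'.le (sq_nonneg _)
    · have hj' : lam < hA.eigenvalues j₀ := by
        rw [hsA, Finset.mem_filter] at hj₀
        exact not_le.mp hj₀.2
      exact mul_lt_mul_of_pos_right hj' (pow_pos (norm_pos_iff.mpr hj₀0) 2)
  have h3 : Complex.re (star y ⬝ᵥ (A *ᵥ y)) ≤ Complex.re (star y ⬝ᵥ (B *ᵥ y)) := by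
    have h0 := hAB.dotProduct_mulVec_nonneg y
    rw [Matrix.sub_mulVec, dotProduct_sub] at h0
    have h0' := (Complex.le_def.mp h0).1
    simp only [Complex.zero_re, Complex.sub_re] at h0'
    linarith
  rw [hQA, hQB, Complex.ofReal_re, Complex.ofReal_re] at h3
  rw [hN] at h1
  linarith


private lemma countLE_le_n {M : Matrix (Fin n) (Fin n) ℂ} (hM : M.IsHermitian) (lam : ℝ) :
    countLE hM lam ≤ n := by
  rw [countLE]
  calc _ ≤ (Finset.univ : Finset (Fin n)).card := Finset.card_le_card (Finset.filter_subset _ _)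
  _ = n := by simp

private lemma countLE_measurable {M : Matrix (Fin n) (Fin n) ℂ} (hM : M.IsHermitian) :
    Measurable (fun lam => (countLE hM lam : ℝ)) := by
  have h : (fun lam => (countLE hM lam : ℝ))
      = fun lam => ∑ j, if hM.eigenvalues j ≤ lam then (1 : ℝ) else 0 := by
    funext lam
    rw [countLE, Finset.card_filter]
    push_cast
    rfl
  rw [h]
  exact Finset.measurable_sum _ fun j _ =>
    Measurable.ite measurableSet_Ici measurable_const measurable_const

private lemma ssf_integrable {A A₀ : Matrix (Fin n) (Fin n) ℂ} (hA : A.IsHermitian)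
    (hA₀ : A₀.IsHermitian) {f : ℝ → ℝ} (hf_anti : Antitone f) {C : ℝ} (hC : ∀ x, |f x| ≤ C) :
    Integrable (fun lam => f lam * ssf hA hA₀ lam) := by
  set B : ℝ := (∑ j, |hA.eigenvalues j|) + (∑ j, |hA₀.eigenvalues j|) with hB
  have habsA : ∀ j, |hA.eigenvalues j| ≤ B := by
    intro j
    have h1 : |hA.eigenvalues j| ≤ ∑ i, |hA.eigenvalues i| :=
      Finset.single_le_sum (f := fun i => |hA.eigenvalues i|) (fun i _ => abs_nonneg _) (Finset.mem_univ j)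
    have h2 : (0 : ℝ) ≤ ∑ i, |hA₀.eigenvalues i| := Finset.sum_nonneg fun i _ => abs_nonneg _
    rw [hB]; linarith
  have habsA₀ : ∀ j, |hA₀.eigenvalues j| ≤ B := by
    intro j
    have h1 : |hA₀.eigenvalues j| ≤ ∑ i, |hA₀.eigenvalues i| :=
      Finset.single_le_sum (f := fun i => |hA₀.eigenvalues i|) (fun i _ => abs_nonneg _) (Finset.mem_univ j)
    have h2 : (0 : ℝ) ≤ ∑ i, |hA.eigenvalues i| := Finset.sum_nonneg fun i _ => abs_nonneg _
    rw [hB]; linarith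
  have hlo : ∀ {M : Matrix (Fin n) (Fin n) ℂ} (hM : M.IsHermitian),
      (∀ j, |hM.eigenvalues j| ≤ B) → ∀ lam, lam < -B → countLE hM lam = 0 := by
    intro M hM hb lam hlam
    rw [countLE, Finset.card_eq_zero, Finset.filter_eq_empty_iff]
    intro j _
    have := abs_le.mp (hb j)
    intro hle
    linarith [this.1]
  have hhi : ∀ {M : Matrix (Fin n) (Fin n) ℂ} (hM : M.IsHermitian),
      (∀ j, |hM.eigenvalues j| ≤ B) → ∀ lam, B < lam → countLE hM lam = n := by
    intro M hM hb lam hlam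
    rw [countLE]
    have he : Finset.univ.filter (fun j => hM.eigenvalues j ≤ lam) = Finset.univ := by
      rw [Finset.filter_eq_self]
      intro j _
      have := abs_le.mp (hb j)
      linarith [this.2]
    rw [he]
    simp
  have hzero : ∀ lam, lam ∉ Set.Icc (-B) B → ssf hA hA₀ lam = 0 := by
    intro lam hlam
    rw [Set.mem_Icc, not_and_or, not_le, not_le] at hlam
    rcases hlam with h | h
    · rw [ssf, hlo hA habsA lam h, hlo hA₀ habsA₀ lam h]
      simp
    · rw [ssf, hhi hA habsA lam h, hhi hA₀ habsA₀ lam h]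
      simp
  have hmeas : Measurable (fun lam => f lam * ssf hA hA₀ lam) :=
    (hf_anti.measurable).mul ((countLE_measurable hA₀).sub (countLE_measurable hA))
  have hC0 : 0 ≤ C := le_trans (abs_nonneg _) (hC 0)
  have hbd : ∀ lam, ‖f lam * ssf hA hA₀ lam‖
      ≤ Set.indicator (Set.Icc (-B) B) (fun _ => C * n) lam := by
    intro lam
    by_cases hmem : lam ∈ Set.Icc (-B) B
    · rw [Set.indicator_of_mem hmem, Real.norm_eq_abs, abs_mul]
      have h2 : |ssf hA hA₀ lam| ≤ n := by
        have ha := countLE_le_n hA lam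
        have hb := countLE_le_n hA₀ lam
        rw [ssf, abs_sub_le_iff]
        constructor
        · have : (countLE hA₀ lam : ℝ) ≤ n := by exact_mod_cast hb
          have h0 : (0:ℝ) ≤ (countLE hA lam : ℝ) := Nat.cast_nonneg _
          linarith
        · have : (countLE hA lam : ℝ) ≤ n := by exact_mod_cast ha
          have h0 : (0:ℝ) ≤ (countLE hA₀ lam : ℝ) := Nat.cast_nonneg _
          linarith
      exact mul_le_mul (hC lam) h2 (abs_nonneg _) hC0
    · rw [Set.indicator_of_notMem hmem, hzero lam hmem]
      simp
  refine Integrable.mono' ?_ hmeas.aestronglyMeasurable (Filter.Eventually.of_forall hbd)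
  exact (integrableOn_const measure_Icc_lt_top.ne).integrable_indicator
    measurableSet_Icc

open ComplexOrder in
/-- For a Hermitian matrix `A₀` and a nonnegative, nonincreasing, bounded `f : ℝ → ℝ`, the
functional `g(V) = ∫_ℝ f(λ) ξ(λ; A₀+V, A₀) dλ` is nondecreasing with respect to the Hermitian
perturbation `V` in the Loewner order. -/
theorem ssf_functional_monotone {n : ℕ} (A₀ : Matrix (Fin n) (Fin n) ℂ)
    (hA₀ : A₀.IsHermitian) (f : ℝ → ℝ) (hf_nonneg : ∀ x, 0 ≤ f x) (hf_anti : Antitone f)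
    (hf_bdd : ∃ C, ∀ x, |f x| ≤ C)
    (V₁ V₂ : Matrix (Fin n) (Fin n) ℂ) (hV₁ : V₁.IsHermitian) (hV₂ : V₂.IsHermitian)
    (hV₁₂ : (V₂ - V₁).PosSemidef) :
    ∫ lam, f lam * ssf (hA₀.add hV₁) hA₀ lam
      ≤ ∫ lam, f lam * ssf (hA₀.add hV₂) hA₀ lam := by
  obtain ⟨C, hC⟩ := hf_bdd
  have hint1 := ssf_integrable (hA₀.add hV₁) hA₀ hf_anti hC
  have hint2 := ssf_integrable (hA₀.add hV₂) hA₀ hf_anti hC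
  refine integral_mono hint1 hint2 fun lam => ?_
  have hps : ((A₀ + V₂) - (A₀ + V₁)).PosSemidef := by
    rw [add_sub_add_left_eq_sub]
    exact hV₁₂
  have hcount := countLE_le_of_posSemidef (hA₀.add hV₁) (hA₀.add hV₂) hps lam
  have hssf : ssf (hA₀.add hV₁) hA₀ lam ≤ ssf (hA₀.add hV₂) hA₀ lam := by
    simp only [ssf]
    have h : (countLE (hA₀.add hV₂) lam : ℝ) ≤ (countLE (hA₀.add hV₁) lam : ℝ) := by
      exact_mod_cast hcount
    linarith
  exact mul_le_mul_of_nonneg_left hssf (hf_nonneg lam)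
end
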